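/- arXiv:math-ph/0105017 — 2 statements merged into one kernel-verified Lean document; each statement's English description precedes it below -/
import Mathlib

section
/- For every f ∈ F_M one has H_C(f) ≥ H_C^r(ρ_f), where ρ_f is the spatial density induced by f. -/
open MeasureTheory Real Filter Topology

noncomputable section

abbrev Space : Type := EuclideanSpace ℝ (Fin 3)
abbrev Phase : Type := Space × Space

/-- Spatial density induced by a phase-space density. -/
def rho (f : Phase → ℝ) : Space → ℝ := fun x => ∫ v : Space, f (x, v)

/-- Induced gravitational potential `U_ρ = -ρ ∗ 1/|·|`. -/
def Upot (ρ : Space → ℝ) : Space → ℝ := fun x => - ∫ y : Space, ρ y / ‖x - y‖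

/-- Kinetic energy. -/
def Ekin (f : Phase → ℝ) : ℝ := (1/2) * ∫ p : Phase, ‖p.2‖^2 * f p

/-- Casimir functional. -/
def Cas (Q : ℝ → ℝ) (f : Phase → ℝ) : ℝ := ∫ p : Phase, Q (f p)

/-- Potential energy. -/
def Epot (ρ : Space → ℝ) : ℝ :=
  -(1/2) * ∫ x : Space, ∫ y : Space, ρ x * ρ y / ‖x - y‖

/-- Energy-Casimir functional. -/
def HC (Q : ℝ → ℝ) (f : Phase → ℝ) : ℝ := Cas Q f + Ekin f + Epot (rho f)

/-- The constraint set `F_M`. -/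
def FM (Q : ℝ → ℝ) (M : ℝ) : Set (Phase → ℝ) :=
  {f | (∀ p, 0 ≤ f p) ∧ Integrable f ∧
       Integrable (fun p : Phase => Q (f p) + (1/2) * ‖p.2‖^2 * f p) ∧
       MemLp (rho f) (ENNReal.ofReal (6/5)) ∧
       (∫ p : Phase, f p) = M}

/-- `∫ ((1/2)|v|² g(v) + Q(g(v))) dv`. -/
def kinQint (Q : ℝ → ℝ) (g : Space → ℝ) : ℝ :=
  ∫ v : Space, ((1/2) * ‖v‖^2 * g v + Q (g v))

/-- The set `G_r`. -/
def Gset (Q : ℝ → ℝ) (r : ℝ) : Set (Space → ℝ) :=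
  {g | (∀ v, 0 ≤ g v) ∧ Integrable g ∧
       Integrable (fun v => (1/2) * ‖v‖^2 * g v + Q (g v)) ∧
       (∫ v : Space, g v) = r}

/-- The reduced integrand `Φ(r) = inf_{g ∈ G_r} ∫ ((1/2)|v|² g + Q(g))`. -/
def Phi (Q : ℝ → ℝ) (r : ℝ) : ℝ := sInf (kinQint Q '' Gset Q r)

/-- The reduced energy-Casimir functional. -/
def HCr (Q : ℝ → ℝ) (ρ : Space → ℝ) : ℝ := (∫ x : Space, Phi Q (ρ x)) + Epot ρ

/-- Assumptions on `Q`: `Q ∈ C¹([0,∞))` with derivative `Q'`, strictly convex,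
`Q(0) = Q'(0) = 0`, and `Q(f)/f → ∞` as `f → ∞`. -/
structure QHyp (Q Q' : ℝ → ℝ) : Prop where
  hasDeriv : ∀ r ∈ Set.Ici (0:ℝ), HasDerivWithinAt Q (Q' r) (Set.Ici 0) r
  contDeriv : ContinuousOn Q' (Set.Ici 0)
  strictConvex : StrictConvexOn ℝ (Set.Ici 0) Q
  zero : Q 0 = 0
  derivZero : Q' 0 = 0
  superlinear : Tendsto (fun f => Q f / f) atTop atTop

/-! For a.e. `x` the velocity slice `v ↦ f (x, v)` lies in `G_{ρ_f(x)}`, so `Φ(ρ_f(x))` is at most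
its kinetic-plus-Casimir energy; integrating in `x` (Fubini) gives `∫ Φ(ρ_f) ≤ C(f) + E_kin(f)`,
while both functionals carry the same potential energy. Convexity with `Q(0) = Q'(0) = 0` makes
`Q ≥ 0`, which bounds `Φ` below and lets the integral of `½|v|²f + Q(f)` split into its two
nonnegative parts. -/

theorem QHyp.nonneg {Q Q' : ℝ → ℝ} (hQ : QHyp Q Q') {r : ℝ} (hr : 0 ≤ r) : 0 ≤ Q r := by
  rcases hr.eq_or_lt with rfl | hr
  · exact hQ.zero.ge
  have hslope := hQ.strictConvex.convexOn.le_slope_of_hasDerivWithinAt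
    Set.self_mem_Ici hr.le hr (hQ.hasDeriv 0 Set.self_mem_Ici)
  rw [hQ.derivZero, slope_def_field, hQ.zero, sub_zero, sub_zero] at hslope
  simpa using (le_div_iff₀ hr).mp hslope

section Reduction

variable {Q : ℝ → ℝ}

theorem kinQint_nonneg (hQ : ∀ r, 0 ≤ r → 0 ≤ Q r) {g : Space → ℝ} (hg : ∀ v, 0 ≤ g v) :
    0 ≤ kinQint Q g :=
  integral_nonneg fun v => add_nonneg (mul_nonneg (by positivity) (hg v)) (hQ _ (hg v))

theorem nonneg_of_mem_kinQint_image_Gset (hQ : ∀ r, 0 ≤ r → 0 ≤ Q r) {r : ℝ} :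
    ∀ y ∈ kinQint Q '' Gset Q r, 0 ≤ y := by
  rintro _ ⟨g, hg, rfl⟩
  exact kinQint_nonneg hQ hg.1

theorem Phi_nonneg (hQ : ∀ r, 0 ≤ r → 0 ≤ Q r) (r : ℝ) : 0 ≤ Phi Q r :=
  Real.sInf_nonneg (nonneg_of_mem_kinQint_image_Gset hQ)

theorem Phi_le_kinQint (hQ : ∀ r, 0 ≤ r → 0 ≤ Q r) {r : ℝ} {g : Space → ℝ} (hg : g ∈ Gset Q r) :
    Phi Q r ≤ kinQint Q g :=
  csInf_le ⟨0, nonneg_of_mem_kinQint_image_Gset hQ⟩ ⟨g, hg, rfl⟩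

variable {f : Phase → ℝ}

theorem integral_kinQint_slice
    (hF : Integrable fun p : Phase => (1/2) * ‖p.2‖^2 * f p + Q (f p)) :
    ∫ x, kinQint Q (fun v => f (x, v)) = ∫ p : Phase, ((1/2) * ‖p.2‖^2 * f p + Q (f p)) := by
  rw [Measure.volume_eq_prod] at hF ⊢
  exact integral_integral hF

theorem Phi_rho_le_kinQint_slice_ae (hQ : ∀ r, 0 ≤ r → 0 ≤ Q r) (hf0 : ∀ p, 0 ≤ f p)
    (hf : Integrable f) (hF : Integrable fun p : Phase => (1/2) * ‖p.2‖^2 * f p + Q (f p)) :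
    ∀ᵐ x, Phi Q (rho f x) ≤ kinQint Q (fun v => f (x, v)) := by
  rw [Measure.volume_eq_prod] at hf hF
  filter_upwards [hF.prod_right_ae, hf.prod_right_ae] with x hFx hfx
  exact Phi_le_kinQint hQ ⟨fun v => hf0 _, hfx, hFx, rfl⟩

theorem integral_Phi_rho_le (hQ : ∀ r, 0 ≤ r → 0 ≤ Q r) (hf0 : ∀ p, 0 ≤ f p)
    (hf : Integrable f) (hF : Integrable fun p : Phase => (1/2) * ‖p.2‖^2 * f p + Q (f p)) :
    ∫ x, Phi Q (rho f x) ≤ ∫ p : Phase, ((1/2) * ‖p.2‖^2 * f p + Q (f p)) := by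
  rw [← integral_kinQint_slice hF]
  have hslices : Integrable fun x => kinQint Q (fun v => f (x, v)) := by
    rw [Measure.volume_eq_prod] at hF
    exact hF.integral_prod_left
  exact integral_mono_of_nonneg (.of_forall fun x => Phi_nonneg hQ _) hslices
    (Phi_rho_le_kinQint_slice_ae hQ hf0 hf hF)

theorem Cas_add_Ekin_eq_integral (hQ : ∀ r, 0 ≤ r → 0 ≤ Q r) (hf0 : ∀ p, 0 ≤ f p)
    (hf : AEStronglyMeasurable f)
    (hF : Integrable fun p : Phase => (1/2) * ‖p.2‖^2 * f p + Q (f p)) :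
    Cas Q f + Ekin f = ∫ p : Phase, ((1/2) * ‖p.2‖^2 * f p + Q (f p)) := by
  have hkin : Integrable fun p : Phase => (1/2) * ‖p.2‖^2 * f p := by
    refine hF.mono' (by fun_prop) (.of_forall fun p => ?_)
    have hkin0 : 0 ≤ (1/2) * ‖p.2‖^2 * f p := mul_nonneg (by positivity) (hf0 p)
    rw [Real.norm_of_nonneg hkin0]
    linarith [hQ _ (hf0 p)]
  have hCas : Integrable fun p : Phase => Q (f p) := by
    simpa only [Pi.sub_def, add_sub_cancel_left] using hF.sub hkin
  rw [integral_add hkin hCas, Cas, Ekin, add_comm]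
  simp only [mul_assoc, integral_const_mul]

end Reduction

theorem HC_ge_HCr_general (Q Q' : ℝ → ℝ) (hQ : QHyp Q Q') (M : ℝ)
    (f : Phase → ℝ) (hf : f ∈ FM Q M) :
    HCr Q (rho f) ≤ HC Q f := by
  obtain ⟨hf0, hfint, hF, -, -⟩ := hf
  replace hF : Integrable fun p : Phase => (1/2) * ‖p.2‖^2 * f p + Q (f p) := by
    simpa only [add_comm] using hF
  have hreduce := integral_Phi_rho_le (fun _ => hQ.nonneg) hf0 hfint hF
  rw [← Cas_add_Ekin_eq_integral (fun _ => hQ.nonneg) hf0 hfint.1 hF] at hreduce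
  rw [HCr, HC]
  linarith

/-- For every `f ∈ F_M` one has `H_C(f) ≥ H_C^r(ρ_f)`. -/
theorem HC_ge_HCr (Q Q' : ℝ → ℝ) (hQ : QHyp Q Q') (M : ℝ) (hM : 0 < M)
    (f : Phase → ℝ) (hf : f ∈ FM Q M) :
    HCr Q (rho f) ≤ HC Q f :=
  HC_ge_HCr_general Q Q' hQ M f hf
end
end

section
/- Suppose f ∈ F_M satisfies, for some constant E₀ and up to sets of measure zero, the Euler–Lagrange relation Q'(f(x,v)) = E₀ − E(x,v) > 0 where f(x,v) > 0 and E₀ − E(x,v) ≤ 0 where f(x,v) = 0, where E(x,v) := (1/2)|v|² + U_f(x). Then H_C(f) = H_C^r(ρ_f). -/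
open MeasureTheory Real Filter Topology

noncomputable section

/-- The particle energy `E(x,v) = (1/2)|v|² + U_f(x)` for the potential induced by `f`. -/
def Eng (f : Phase → ℝ) : Phase → ℝ := fun p => (1/2) * ‖p.2‖^2 + Upot (rho f) p.1

/-! The Euler–Lagrange relation says that, for a.e. `x`, the fibre `v ↦ f(x,v)` satisfies the
Karush–Kuhn–Tucker conditions, with multiplier `E₀ - U_f(x)`, for the convex problem defining
`Φ(ρ_f(x))`. By convexity of `Q` these conditions make the fibre a minimiser: the tangent-line
inequality of `Q` at `f(x,v)` bounds `(1/2)|v|² g + Q(g)` below pointwise, and the mass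
constraint kills the multiplier term after integration. Hence `Φ(ρ_f(x)) = ∫ ((1/2)|v|² f + Q(f)) dv`
for a.e. `x`, and Fubini turns `C(f) + E_kin(f)` into `∫ Φ(ρ_f)`. -/

lemma ConvexOn.add_mul_sub_le_of_hasDerivWithinAt {S : Set ℝ} {φ : ℝ → ℝ} {x y φ' : ℝ}
    (hφ : ConvexOn ℝ S φ) (hx : x ∈ S) (hy : y ∈ S) (hφ' : HasDerivWithinAt φ φ' S x) :
    φ x + φ' * (y - x) ≤ φ y := by
  rcases lt_trichotomy x y with hxy | rfl | hyx
  · have := hφ.le_slope_of_hasDerivWithinAt hx hy hxy hφ'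
    rw [slope_def_field, le_div_iff₀ (sub_pos.mpr hxy)] at this
    linarith
  · simp
  · have := hφ.slope_le_of_hasDerivWithinAt hy hx hyx hφ'
    rw [slope_def_field, div_le_iff₀ (sub_pos.mpr hyx)] at this
    linarith

namespace QHyp

variable {Q Q' : ℝ → ℝ}

lemma add_deriv_mul_sub_le (hQ : QHyp Q Q') {a b : ℝ} (ha : 0 ≤ a) (hb : 0 ≤ b) :
    Q a + Q' a * (b - a) ≤ Q b :=
  hQ.strictConvex.convexOn.add_mul_sub_le_of_hasDerivWithinAt ha hb (hQ.hasDeriv a ha)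

lemma nonneg_s2 (hQ : QHyp Q Q') {b : ℝ} (hb : 0 ≤ b) : 0 ≤ Q b := by
  simpa [hQ.zero, hQ.derivZero] using hQ.add_deriv_mul_sub_le le_rfl hb

lemma aestronglyMeasurable_comp (hQ : QHyp Q Q') {α : Type*} [MeasurableSpace α]
    {μ : Measure α} {g : α → ℝ} (hg : AEStronglyMeasurable g μ) (hg0 : ∀ v, 0 ≤ g v) :
    AEStronglyMeasurable (fun v => Q (g v)) μ := by
  have hQc : ContinuousOn Q (Set.Ici 0) := fun r hr => (hQ.hasDeriv r hr).continuousWithinAt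
  have hQmax : Continuous fun s : ℝ => Q (max s 0) :=
    hQc.comp_continuous (continuous_id.max continuous_const) fun s => le_max_right s 0
  simpa only [max_eq_left (hg0 _)] using hQmax.comp_aestronglyMeasurable hg

/-- The Karush–Kuhn–Tucker conditions at `a`, with multiplier `c`, for minimising
`e b + Q b` under a mass constraint. -/
lemma mul_add_add_mul_sub_le (hQ : QHyp Q Q') {a b e c : ℝ} (ha : 0 ≤ a) (hb : 0 ≤ b)
    (hpos : 0 < a → Q' a = c - e) (hzero : a = 0 → c - e ≤ 0) :
    e * a + Q a + c * (b - a) ≤ e * b + Q b := by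
  rcases ha.eq_or_lt with rfl | ha
  · have := hzero rfl
    have := hQ.nonneg_s2 hb
    rw [hQ.zero]
    nlinarith
  · have := hQ.add_deriv_mul_sub_le ha.le hb
    rw [hpos ha] at this
    linarith

variable {α : Type*} [MeasurableSpace α] {μ : Measure α}

lemma integral_le_of_eulerLagrange (hQ : QHyp Q Q') {e g₀ g : α → ℝ} {c : ℝ}
    (hg₀ : ∀ v, 0 ≤ g₀ v) (hg : ∀ v, 0 ≤ g v)
    (hEL : ∀ᵐ v ∂μ, (0 < g₀ v → Q' (g₀ v) = c - e v) ∧ (g₀ v = 0 → c - e v ≤ 0))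
    (hg₀i : Integrable g₀ μ) (hgi : Integrable g μ)
    (hg₀E : Integrable (fun v => e v * g₀ v + Q (g₀ v)) μ)
    (hgE : Integrable (fun v => e v * g v + Q (g v)) μ)
    (hmass : ∫ v, g v ∂μ = ∫ v, g₀ v ∂μ) :
    ∫ v, (e v * g₀ v + Q (g₀ v)) ∂μ ≤ ∫ v, (e v * g v + Q (g v)) ∂μ := by
  have hmult : Integrable (fun v => c * (g v - g₀ v)) μ := (hgi.sub hg₀i).const_mul c
  calc ∫ v, (e v * g₀ v + Q (g₀ v)) ∂μ
      = ∫ v, (e v * g₀ v + Q (g₀ v) + c * (g v - g₀ v)) ∂μ := by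
        rw [integral_add hg₀E hmult, integral_const_mul, integral_sub hgi hg₀i, hmass,
          sub_self, mul_zero, add_zero]
    _ ≤ ∫ v, (e v * g v + Q (g v)) ∂μ := by
        refine integral_mono_ae (hg₀E.add hmult) hgE ?_
        filter_upwards [hEL] with v hv
        exact hQ.mul_add_add_mul_sub_le (hg₀ v) (hg v) hv.1 hv.2

lemma Phi_eq_kinQint_of_eulerLagrange (hQ : QHyp Q Q') {g₀ : Space → ℝ} {c : ℝ}
    (hg₀ : g₀ ∈ Gset Q (∫ v, g₀ v))
    (hEL : ∀ᵐ v, (0 < g₀ v → Q' (g₀ v) = c - (1/2) * ‖v‖^2) ∧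
      (g₀ v = 0 → c - (1/2) * ‖v‖^2 ≤ 0)) :
    Phi Q (∫ v, g₀ v) = kinQint Q g₀ := by
  refine IsLeast.csInf_eq ⟨⟨g₀, hg₀, rfl⟩, ?_⟩
  rintro _ ⟨g, ⟨hg, hgi, hgE, hmass⟩, rfl⟩
  exact hQ.integral_le_of_eulerLagrange hg₀.1 hg hEL hg₀.2.1 hgi hg₀.2.2.1 hgE hmass

lemma Cas_add_Ekin_eq (hQ : QHyp Q Q') {f : Phase → ℝ} (hf0 : ∀ p, 0 ≤ f p)
    (hfi : Integrable f) (hE : Integrable fun p : Phase => (1/2) * ‖p.2‖^2 * f p + Q (f p)) :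
    Cas Q f + Ekin f = ∫ p : Phase, ((1/2) * ‖p.2‖^2 * f p + Q (f p)) := by
  have hkin_meas : AEStronglyMeasurable (fun p : Phase => (1/2) * ‖p.2‖^2 * f p) volume :=
    (continuous_const.mul (continuous_snd.norm.pow 2)).aestronglyMeasurable.mul
      hfi.aestronglyMeasurable
  obtain ⟨hkin, hcas⟩ := (integrable_add_iff_of_nonneg hkin_meas
    (.of_forall fun p => mul_nonneg (by positivity) (hf0 p))
    (.of_forall fun p => hQ.nonneg_s2 (hf0 p))).mp hE
  rw [integral_add hkin hcas, Cas, Ekin, ← integral_const_mul, add_comm]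
  simp only [mul_assoc]

end QHyp

theorem HC_eq_HCr_of_eulerLagrange_general (Q Q' : ℝ → ℝ) (hQ : QHyp Q Q') (M : ℝ)
    (f : Phase → ℝ) (hf : f ∈ FM Q M) (E₀ : ℝ)
    (hEL : ∀ᵐ p : Phase ∂volume,
      (0 < f p → Q' (f p) = E₀ - Eng f p ∧ 0 < E₀ - Eng f p) ∧
      (f p = 0 → E₀ - Eng f p ≤ 0)) :
    HC Q f = HCr Q (rho f) := by
  obtain ⟨hf0, hfi, hE, -, -⟩ := hf
  replace hE : Integrable fun p : Phase => (1/2) * ‖p.2‖^2 * f p + Q (f p) := by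
    simpa only [add_comm] using hE
  have hfibre : ∀ᵐ x, Phi Q (rho f x) = kinQint Q fun v => f (x, v) := by
    filter_upwards [hfi.prod_right_ae, hE.prod_right_ae, Measure.ae_ae_of_ae_prod hEL]
      with x hfx hEx hELx
    refine hQ.Phi_eq_kinQint_of_eulerLagrange (c := E₀ - Upot (rho f) x)
      ⟨fun v => hf0 (x, v), hfx, hEx, rfl⟩ ?_
    filter_upwards [hELx] with v hv
    have hEng : E₀ - Eng f (x, v) = E₀ - Upot (rho f) x - (1/2) * ‖v‖^2 := by
      rw [Eng]; ring
    exact ⟨fun h => hEng ▸ (hv.1 h).1, fun h => hEng ▸ hv.2 h⟩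
  rw [HC, HCr, hQ.Cas_add_Ekin_eq hf0 hfi hE, Measure.volume_eq_prod, integral_prod _ hE,
    integral_congr_ae hfibre]
  rfl

/-- If `f ∈ F_M` satisfies the Euler-Lagrange relation
`Q'(f) = E₀ - E > 0` where `f > 0` and `E₀ - E ≤ 0` where `f = 0` (a.e.),
then `H_C(f) = H_C^r(ρ_f)`. -/
theorem HC_eq_HCr_of_eulerLagrange (Q Q' : ℝ → ℝ) (hQ : QHyp Q Q') (M : ℝ) (hM : 0 < M)
    (f : Phase → ℝ) (hf : f ∈ FM Q M) (E₀ : ℝ)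
    (hEL : ∀ᵐ p : Phase ∂volume,
      (0 < f p → Q' (f p) = E₀ - Eng f p ∧ 0 < E₀ - Eng f p) ∧
      (f p = 0 → E₀ - Eng f p ≤ 0)) :
    HC Q f = HCr Q (rho f) :=
  HC_eq_HCr_of_eulerLagrange_general Q Q' hQ M f hf E₀ hEL
end
end
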